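/- Let (a^t, b^t)_{t≥0} denote the re-parameterized Population EM iterates for Model 2, and assume b^0 ≠ 0 and θ* ≠ 0. Let M₀ denote the linear span of {b^0, θ*} in ℝ^d. Then b^t ∈ M₀ for all t ≥ 0. -/

import Mathlib

open MeasureTheory Real Filter InnerProductGeometry RealInnerProductSpace

/-- Standard Gaussian density on `ℝ^d` (identity covariance, mean zero). -/
noncomputable def gpdf (d : ℕ) (x : EuclideanSpace ℝ (Fin d)) : ℝ :=
  (2 * π) ^ (-(d : ℝ) / 2) * Real.exp (-‖x‖ ^ 2 / 2)

/-- `v_d(y, μ1, μ2) = φ_d(y − μ1)/(φ_d(y − μ1) + φ_d(y − μ2))`. -/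
noncomputable def v2 (d : ℕ) (y μ1 μ2 : EuclideanSpace ℝ (Fin d)) : ℝ :=
  gpdf d (y - μ1) / (gpdf d (y - μ1) + gpdf d (y - μ2))

/-- The density of the mixture `0.5 N(μ1*, I_d) + 0.5 N(μ2*, I_d)`. -/
noncomputable def mix2 (d : ℕ) (μ1s μ2s y : EuclideanSpace ℝ (Fin d)) : ℝ :=
  (gpdf d (y - μ1s) + gpdf d (y - μ2s)) / 2

/-- Population EM iterates `(μ1^t, μ2^t)` for Model 2. -/
noncomputable def em2 (d : ℕ) (μ1s μ2s μ10 μ20 : EuclideanSpace ℝ (Fin d)) :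
    ℕ → EuclideanSpace ℝ (Fin d) × EuclideanSpace ℝ (Fin d)
  | 0 => (μ10, μ20)
  | t + 1 =>
    let p := em2 d μ1s μ2s μ10 μ20 t
    ((∫ y, v2 d y p.1 p.2 * mix2 d μ1s μ2s y)⁻¹ •
        ∫ y, (v2 d y p.1 p.2 * mix2 d μ1s μ2s y) • y,
     (∫ y, (1 - v2 d y p.1 p.2) * mix2 d μ1s μ2s y)⁻¹ •
        ∫ y, ((1 - v2 d y p.1 p.2) * mix2 d μ1s μ2s y) • y)

/-- Re-parameterized iterate `a^t = (μ1^t + μ2^t)/2 − (μ1* + μ2*)/2`. -/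
noncomputable def aIter (d : ℕ) (μ1s μ2s μ10 μ20 : EuclideanSpace ℝ (Fin d)) (t : ℕ) :
    EuclideanSpace ℝ (Fin d) :=
  (2:ℝ)⁻¹ • ((em2 d μ1s μ2s μ10 μ20 t).1 + (em2 d μ1s μ2s μ10 μ20 t).2) -
    (2:ℝ)⁻¹ • (μ1s + μ2s)

/-- Re-parameterized iterate `b^t = (μ2^t − μ1^t)/2`. -/
noncomputable def bIter (d : ℕ) (μ1s μ2s μ10 μ20 : EuclideanSpace ℝ (Fin d)) (t : ℕ) :
    EuclideanSpace ℝ (Fin d) :=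
  (2:ℝ)⁻¹ • ((em2 d μ1s μ2s μ10 μ20 t).2 - (em2 d μ1s μ2s μ10 μ20 t).1)

/-- `θ* = (μ2* − μ1*)/2`. -/
noncomputable def thetaStar (d : ℕ) (μ1s μ2s : EuclideanSpace ℝ (Fin d)) :
    EuclideanSpace ℝ (Fin d) :=
  (2:ℝ)⁻¹ • (μ2s - μ1s)

/-
Let `K` be a subspace containing `θ*` and `b^t`, and let `R y = ρ (y - m) + m` be the reflection
across the affine subspace `m + K`, where `ρ` is the orthogonal reflection across `K` and `m` is the
midpoint of `μ1*, μ2*`. Then `R` is an isometry fixing `μ1*` and `μ2*`, so it preserves the mixture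
density `f`; and it preserves `⟪y, μ1^t - μ2^t⟫`, on which the responsibility `v_d(y, μ1^t, μ2^t)`
depends alone. Both EM updates are therefore means of `R`-invariant weights, hence fixed points of
`R` (since `R` preserves Lebesgue measure), and their difference `2 b^{t+1}` is fixed by `ρ`, i.e.
lies in `K`. Induction on `t` with `K = span {b^0, θ*}` concludes.
-/

section Reflection

variable {E : Type*} [NormedAddCommGroup E] [InnerProductSpace ℝ E] [FiniteDimensional ℝ E]
  (K : Submodule ℝ E)

theorem inner_reflection_sub_add_of_mem {u : E} (hu : u ∈ K) (p y : E) :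
    ⟪K.reflection (y - p) + p, u⟫ = ⟪y, u⟫ := by
  rw [inner_add_left, ← K.reflection_mem_subspace_eq_self hu, K.reflection.inner_map_map,
    K.reflection_mem_subspace_eq_self hu, inner_sub_left, sub_add_cancel]

theorem sub_mem_of_reflection_sub_add_eq (p : E) {x₁ x₂ : E}
    (h₁ : K.reflection (x₁ - p) + p = x₁) (h₂ : K.reflection (x₂ - p) + p = x₂) :
    x₁ - x₂ ∈ K := by
  rw [← K.reflection_eq_self_iff, ← sub_sub_sub_cancel_right _ _ p, map_sub]
  rw [← eq_sub_iff_add_eq] at h₁ h₂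
  rw [h₁, h₂]

variable [MeasurableSpace E] [BorelSpace E]

noncomputable def weightedMean (w : E → ℝ) : E :=
  (∫ y, w y)⁻¹ • ∫ y, w y • y

theorem integral_comp_reflection_sub_add {F : Type*} [NormedAddCommGroup F] [NormedSpace ℝ F]
    (p : E) (f : E → F) : ∫ y, f (K.reflection (y - p) + p) = ∫ y, f y := by
  rw [integral_sub_right_eq_self (fun y => f (K.reflection y + p)) p,
    K.reflection.measurePreserving.integral_comp
      K.reflection.toHomeomorph.measurableEmbedding (fun y => f (y + p)),
    integral_add_right_eq_self]

theorem reflection_weightedMean_sub_add {w : E → ℝ} (p : E) (hw : Integrable w)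
    (hwy : Integrable fun y => w y • y) (hW : ∫ y, w y ≠ 0)
    (hinv : ∀ y, w (K.reflection (y - p) + p) = w y) :
    K.reflection (weightedMean w - p) + p = weightedMean w := by
  set L : E →L[ℝ] E := K.reflection.toLinearIsometry.toContinuousLinearMap
  have hL : ∀ x, K.reflection x = L x := fun _ => rfl
  have hI : ∫ y, w y • y = L (∫ y, w y • y) + (∫ y, w y) • (p - L p) := by
    calc ∫ y, w y • y = ∫ y, w y • (K.reflection (y - p) + p) := by
          conv_lhs => rw [← integral_comp_reflection_sub_add K p]
          simp_rw [hinv]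
      _ = ∫ y, (L (w y • y) + w y • (p - L p)) := by
          congr 1 with y
          simp only [← hL, map_sub, map_smul, smul_add, smul_sub]
          abel
      _ = L (∫ y, w y • y) + (∫ y, w y) • (p - L p) := by
          rw [integral_add (L.integrable_comp hwy) (hw.smul_const _), L.integral_comp_comm hwy,
            integral_smul_const]
  rw [hL, map_sub, weightedMean, map_smul]
  nth_rewrite 2 [hI]
  rw [smul_add, smul_smul, inv_mul_cancel₀ hW, one_smul]
  abel

end Reflection

theorem integrable_exp_neg_mul_sq_norm {E : Type*} [NormedAddCommGroup E] [InnerProductSpace ℝ E]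
    [FiniteDimensional ℝ E] [MeasurableSpace E] [BorelSpace E] {b : ℝ} (hb : 0 < b) :
    Integrable fun v : E => exp (-b * ‖v‖ ^ 2) := by
  have h := (GaussianFourier.integrable_cexp_neg_mul_sq_norm_add (V := E) (b := (b : ℂ))
    (by simpa using hb) 0 0).norm
  simpa [Complex.norm_exp, ← Complex.ofReal_pow] using h

theorem le_exp_sq_div_four (x : ℝ) : x ≤ exp (x ^ 2 / 4) := by
  nlinarith [add_one_le_exp (x ^ 2 / 4), sq_nonneg (x / 2 - 1)]

section Gaussian

variable {d : ℕ}

theorem gpdf_pos (x : EuclideanSpace ℝ (Fin d)) : 0 < gpdf d x := by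
  unfold gpdf
  positivity

@[fun_prop]
theorem continuous_gpdf : Continuous (gpdf d) := by
  unfold gpdf
  fun_prop

theorem gpdf_reflection_sub_add (K : Submodule ℝ (EuclideanSpace ℝ (Fin d)))
    {p μ : EuclideanSpace ℝ (Fin d)} (hμ : μ - p ∈ K) (y : EuclideanSpace ℝ (Fin d)) :
    gpdf d (K.reflection (y - p) + p - μ) = gpdf d (y - μ) := by
  have h : K.reflection (y - p) + p - μ = K.reflection (y - μ) := by
    calc K.reflection (y - p) + p - μ = K.reflection (y - p) - K.reflection (μ - p) := by
          rw [K.reflection_mem_subspace_eq_self hμ]; abel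
      _ = K.reflection (y - μ) := by rw [← map_sub, sub_sub_sub_cancel_right]
  rw [h, gpdf, gpdf, LinearIsometryEquiv.norm_map]

theorem integrable_gpdf : Integrable (gpdf d) :=
  (integrable_exp_neg_mul_sq_norm (b := 1 / 2) (by norm_num)).const_mul ((2 * π) ^ (-(d : ℝ) / 2))
    |>.congr <| .of_forall fun x => by simp only [gpdf]; ring_nf

theorem gpdf_mul_norm_le (x : EuclideanSpace ℝ (Fin d)) :
    gpdf d x * ‖x‖ ≤ (2 * π) ^ (-(d : ℝ) / 2) * exp (-(1 / 4) * ‖x‖ ^ 2) := by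
  calc gpdf d x * ‖x‖
      ≤ (2 * π) ^ (-(d : ℝ) / 2) * exp (-‖x‖ ^ 2 / 2) * exp (‖x‖ ^ 2 / 4) :=
        mul_le_mul_of_nonneg_left (le_exp_sq_div_four _) (gpdf_pos x).le
    _ = (2 * π) ^ (-(d : ℝ) / 2) * exp (-(1 / 4) * ‖x‖ ^ 2) := by
        rw [mul_assoc, ← exp_add]
        ring_nf

theorem integrable_gpdf_smul_self :
    Integrable fun x : EuclideanSpace ℝ (Fin d) => gpdf d x • x := by
  refine ((integrable_exp_neg_mul_sq_norm (b := 1 / 4) (by norm_num)).const_mul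
    ((2 * π) ^ (-(d : ℝ) / 2))).mono' (by fun_prop) (.of_forall fun x => ?_)
  rw [norm_smul, Real.norm_of_nonneg (gpdf_pos x).le]
  exact gpdf_mul_norm_le x

theorem integrable_gpdf_sub_smul (μ : EuclideanSpace ℝ (Fin d)) :
    Integrable fun y => gpdf d (y - μ) • y := by
  refine ((integrable_gpdf_smul_self.add (integrable_gpdf.smul_const μ)).comp_sub_right μ).congr
    (.of_forall fun y => ?_)
  simp only [Pi.add_apply, ← smul_add, sub_add_cancel]

variable {μ1s μ2s : EuclideanSpace ℝ (Fin d)}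

theorem mix2_pos (y : EuclideanSpace ℝ (Fin d)) : 0 < mix2 d μ1s μ2s y := by
  have := gpdf_pos (y - μ1s)
  have := gpdf_pos (y - μ2s)
  unfold mix2
  positivity

@[fun_prop]
theorem continuous_mix2 : Continuous (mix2 d μ1s μ2s) := by
  unfold mix2
  fun_prop

theorem integrable_mix2 : Integrable (mix2 d μ1s μ2s) :=
  ((integrable_gpdf.comp_sub_right μ1s).add (integrable_gpdf.comp_sub_right μ2s)).div_const 2

theorem integrable_mix2_smul_self : Integrable fun y => mix2 d μ1s μ2s y • y := by
  refine (((integrable_gpdf_sub_smul μ1s).add (integrable_gpdf_sub_smul μ2s)).smul (2⁻¹ : ℝ))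
    |>.congr (.of_forall fun y => ?_)
  simp only [mix2, Pi.smul_apply, Pi.add_apply, div_eq_inv_mul, mul_smul, add_smul]

end Gaussian

section EM

variable {d : ℕ} {μ1s μ2s : EuclideanSpace ℝ (Fin d)} (K : Submodule ℝ (EuclideanSpace ℝ (Fin d)))

theorem mix2_reflection_sub_add {p : EuclideanSpace ℝ (Fin d)} (h1 : μ1s - p ∈ K)
    (h2 : μ2s - p ∈ K) (y : EuclideanSpace ℝ (Fin d)) :
    mix2 d μ1s μ2s (K.reflection (y - p) + p) = mix2 d μ1s μ2s y := by
  rw [mix2, mix2, gpdf_reflection_sub_add K h1, gpdf_reflection_sub_add K h2]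

theorem reflection_weightedMean_of_le_mix2 {w : EuclideanSpace ℝ (Fin d) → ℝ}
    (p : EuclideanSpace ℝ (Fin d)) (hw : Continuous w) (hpos : ∀ y, 0 < w y)
    (hle : ∀ y, w y ≤ mix2 d μ1s μ2s y)
    (hinv : ∀ y, w (K.reflection (y - p) + p) = w y) :
    K.reflection (weightedMean w - p) + p = weightedMean w := by
  have hw_int : Integrable w :=
    integrable_mix2.mono' hw.aestronglyMeasurable
      (.of_forall fun y => by rw [Real.norm_of_nonneg (hpos y).le]; exact hle y)
  have hwy_int : Integrable fun y => w y • y := by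
    refine (integrable_mix2_smul_self (μ1s := μ1s) (μ2s := μ2s)).norm.mono' (by fun_prop)
      (.of_forall fun y => ?_)
    rw [norm_smul, norm_smul, Real.norm_of_nonneg (hpos y).le,
      Real.norm_of_nonneg (mix2_pos y).le]
    exact mul_le_mul_of_nonneg_right (hle y) (norm_nonneg y)
  have hW : 0 < ∫ y, w y :=
    integral_pos_of_integrable_nonneg_nonzero (x := 0) hw hw_int (fun y => (hpos y).le)
      (hpos 0).ne'
  exact reflection_weightedMean_sub_add K p hw_int hwy_int hW.ne' hinv

variable {μ1 μ2 : EuclideanSpace ℝ (Fin d)}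

theorem v2_pos (y : EuclideanSpace ℝ (Fin d)) : 0 < v2 d y μ1 μ2 := by
  have := gpdf_pos (y - μ1)
  have := gpdf_pos (y - μ2)
  unfold v2
  positivity

theorem v2_lt_one (y : EuclideanSpace ℝ (Fin d)) : v2 d y μ1 μ2 < 1 := by
  have := gpdf_pos (y - μ1)
  have := gpdf_pos (y - μ2)
  rw [v2, div_lt_one (by positivity)]
  linarith

@[fun_prop]
theorem continuous_v2 : Continuous fun y => v2 d y μ1 μ2 := by
  unfold v2
  exact Continuous.div (by fun_prop) (by fun_prop) fun y =>
    (add_pos (gpdf_pos (y - μ1)) (gpdf_pos (y - μ2))).ne'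

theorem v2_eq_of_inner_sub_eq {y z : EuclideanSpace ℝ (Fin d)}
    (h : ⟪y, μ1 - μ2⟫ = ⟪z, μ1 - μ2⟫) : v2 d y μ1 μ2 = v2 d z μ1 μ2 := by
  have hnorm : ‖y - μ1‖ ^ 2 + ‖z - μ2‖ ^ 2 = ‖z - μ1‖ ^ 2 + ‖y - μ2‖ ^ 2 := by
    rw [inner_sub_right, inner_sub_right] at h
    simp only [norm_sub_sq_real]
    linarith
  have hcross : gpdf d (y - μ1) * gpdf d (z - μ2) = gpdf d (z - μ1) * gpdf d (y - μ2) := by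
    simp only [gpdf]
    rw [mul_mul_mul_comm, ← exp_add, mul_mul_mul_comm, ← exp_add]
    congr 2
    linarith
  have := gpdf_pos (y - μ1); have := gpdf_pos (y - μ2)
  have := gpdf_pos (z - μ1); have := gpdf_pos (z - μ2)
  rw [v2, v2, div_eq_div_iff (by positivity) (by positivity), mul_add, mul_add, hcross]
  ring

theorem weightedMean_sub_weightedMean_responsibility_mem (hθ : μ2s - μ1s ∈ K)
    (h12 : μ1 - μ2 ∈ K) :
    weightedMean (fun y => (1 - v2 d y μ1 μ2) * mix2 d μ1s μ2s y) -
      weightedMean (fun y => v2 d y μ1 μ2 * mix2 d μ1s μ2s y) ∈ K := by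
  set p : EuclideanSpace ℝ (Fin d) := (2 : ℝ)⁻¹ • (μ1s + μ2s)
  have h1 : μ1s - p ∈ K := by
    convert K.smul_mem (-(2 : ℝ)⁻¹) hθ using 1
    module
  have h2 : μ2s - p ∈ K := by
    convert K.smul_mem (2 : ℝ)⁻¹ hθ using 1
    module
  have hv2 : ∀ y, v2 d (K.reflection (y - p) + p) μ1 μ2 = v2 d y μ1 μ2 := fun y =>
    v2_eq_of_inner_sub_eq (inner_reflection_sub_add_of_mem K h12 p y)
  have hfix₂ := reflection_weightedMean_of_le_mix2 (μ1s := μ1s) (μ2s := μ2s) K p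
    (w := fun y => (1 - v2 d y μ1 μ2) * mix2 d μ1s μ2s y) (by fun_prop)
    (fun y => mul_pos (sub_pos.2 (v2_lt_one y)) (mix2_pos y))
    (fun y => mul_le_of_le_one_left (mix2_pos y).le (sub_le_self _ (v2_pos y).le))
    (fun y => by rw [hv2, mix2_reflection_sub_add K h1 h2])
  have hfix₁ := reflection_weightedMean_of_le_mix2 (μ1s := μ1s) (μ2s := μ2s) K p
    (w := fun y => v2 d y μ1 μ2 * mix2 d μ1s μ2s y) (by fun_prop)
    (fun y => mul_pos (v2_pos y) (mix2_pos y))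
    (fun y => mul_le_of_le_one_left (mix2_pos y).le (v2_lt_one y).le)
    (fun y => by rw [hv2, mix2_reflection_sub_add K h1 h2])
  exact sub_mem_of_reflection_sub_add_eq K p hfix₂ hfix₁

end EM

theorem stmt11_general (d : ℕ) (μ1s μ2s μ10 μ20 : EuclideanSpace ℝ (Fin d)) :
    ∀ t : ℕ, bIter d μ1s μ2s μ10 μ20 t ∈
      Submodule.span ℝ {bIter d μ1s μ2s μ10 μ20 0, thetaStar d μ1s μ2s} := by
  set K := Submodule.span ℝ {bIter d μ1s μ2s μ10 μ20 0, thetaStar d μ1s μ2s}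
  have hθ : μ2s - μ1s ∈ K := by
    have hθK : thetaStar d μ1s μ2s ∈ K := Submodule.subset_span (by simp)
    convert K.smul_mem 2 hθK using 1
    simp only [thetaStar, smul_smul]
    norm_num
  intro t
  induction t with
  | zero => exact Submodule.subset_span (by simp)
  | succ t ih =>
    have h12 : (em2 d μ1s μ2s μ10 μ20 t).1 - (em2 d μ1s μ2s μ10 μ20 t).2 ∈ K := by
      convert K.smul_mem (-2) ih using 1
      simp only [bIter, smul_smul]
      module
    -- `b^{t+1}` unfolds to `2⁻¹ •` the difference of the two EM weighted means.
    exact K.smul_mem (2 : ℝ)⁻¹ (weightedMean_sub_weightedMean_responsibility_mem K hθ h12)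

/-- The iterates `b^t` stay in the span `M₀` of `{b^0, θ*}`. -/
theorem stmt11 (d : ℕ) (hd : 1 ≤ d) (μ1s μ2s μ10 μ20 : EuclideanSpace ℝ (Fin d))
    (hb0 : bIter d μ1s μ2s μ10 μ20 0 ≠ 0) (hθ : thetaStar d μ1s μ2s ≠ 0) :
    ∀ t : ℕ, bIter d μ1s μ2s μ10 μ20 t ∈
      Submodule.span ℝ {bIter d μ1s μ2s μ10 μ20 0, thetaStar d μ1s μ2s} :=
  stmt11_general d μ1s μ2s μ10 μ20
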